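/- arXiv:2505.15362 — 7 statements merged into one kernel-verified Lean document; each statement's English description precedes it below -/
import Mathlib

section
/- If \(\mathcal{E}\) is a 3-blocking set on an \(n\)-element set with \(n \ge 3\), then \(|\mathcal{E}| \ge \lceil n(n-2)/3 \rceil\). -/
/-- A `d`-partition of a finite set `V`: `d` pairwise disjoint nonempty parts whose union is `V`. -/
def IsDPartition {α : Type*} [DecidableEq α] (d : ℕ) (V : Finset α)
    (P : Fin d → Finset α) : Prop :=
  (∀ i, (P i).Nonempty) ∧ (∀ i j, i ≠ j → Disjoint (P i) (P j)) ∧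
    Finset.univ.biUnion P = V

/-- `E` is a `d`-blocking set on `V`: a family of `d`-element subsets of `V` such that every
`d`-partition of `V` has a member of `E` meeting all parts. -/
def IsBlockingSet {α : Type*} [DecidableEq α] (d : ℕ) (V : Finset α)
    (E : Finset (Finset α)) : Prop :=
  (∀ e ∈ E, e ⊆ V ∧ e.card = d) ∧
  ∀ P : Fin d → Finset α, IsDPartition d V P → ∃ e ∈ E, ∀ i, (e ∩ P i).Nonempty

/-- `phi d n` is the minimum size of a `d`-blocking set on an `n`-element set. -/
noncomputable def phi (d n : ℕ) : ℕ :=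
  sInf { m | ∃ E : Finset (Finset (Fin n)),
    IsBlockingSet d Finset.univ E ∧ E.card = m }

/-!
Deleting `x` from the triples through `x` turns a 3-blocking set on `V` into a family of pairs
crossing every bipartition of `V \ {x}`, i.e. the edge set of a connected graph on `n - 1`
vertices, which has at least `n - 2` edges. So every vertex lies in at least `n - 2` triples, and
counting incidences gives `3 |E| ≥ n (n - 2)`.
-/

open Finset

section

variable {α : Type*} [DecidableEq α]

theorem IsDPartition.subset {d : ℕ} {V : Finset α} {P : Fin d → Finset α}
    (hP : IsDPartition d V P) (i : Fin d) : P i ⊆ V :=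
  hP.2.2 ▸ subset_biUnion_of_mem P (mem_univ i)

theorem IsDPartition.cons {d : ℕ} {V : Finset α} {x : α} {P : Fin d → Finset α}
    (hP : IsDPartition d (V.erase x) P) (hx : x ∈ V) :
    IsDPartition (d + 1) V (Fin.cons {x} P) := by
  have hxP : ∀ i, x ∉ P i := fun i h => notMem_erase x V (hP.subset i h)
  obtain ⟨hne, hdisj, hunion⟩ := hP
  refine ⟨Fin.cases (singleton_nonempty x) hne, ?_, ?_⟩
  · intro i j hij
    cases i using Fin.cases <;> cases j using Fin.cases
    · exact absurd rfl hij
    · simpa using hxP _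
    · simpa using hxP _
    · exact hdisj _ _ (fun h => hij (congrArg Fin.succ h))
  · rw [← insert_erase hx, ← hunion]
    ext a
    simp [Fin.exists_fin_succ]

theorem isDPartition_two {W S : Finset α} (hSW : S ⊆ W) (hS : S.Nonempty) (hSW' : S ≠ W) :
    IsDPartition 2 W ![S, W \ S] := by
  refine ⟨?_, ?_, ?_⟩
  · intro i
    fin_cases i
    · exact hS
    · exact sdiff_nonempty.mpr fun h => hSW' (hSW.antisymm h)
  · intro i j hij
    fin_cases i <;> fin_cases j <;> simp_all [disjoint_sdiff, sdiff_disjoint]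
  · simp [Fin.univ_succ, union_sdiff_of_subset hSW]

def link (E : Finset (Finset α)) (x : α) : Finset (Finset α) :=
  {e ∈ E | x ∈ e}.image (·.erase x)

theorem card_link (E : Finset (Finset α)) (x : α) : #(link E x) = #{e ∈ E | x ∈ e} :=
  card_image_of_injOn fun _ ha _ hb =>
    erase_injOn' x (mem_filter.mp ha).2 (mem_filter.mp hb).2

theorem IsBlockingSet.link {d : ℕ} {V : Finset α} {E : Finset (Finset α)}
    (hE : IsBlockingSet (d + 1) V E) {x : α} (hx : x ∈ V) :
    IsBlockingSet d (V.erase x) (link E x) := by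
  refine ⟨?_, fun P hP => ?_⟩
  · simp only [_root_.link, mem_image, mem_filter]
    rintro _ ⟨e, ⟨he, hxe⟩, rfl⟩
    obtain ⟨heV, hcard⟩ := hE.1 e he
    exact ⟨erase_subset_erase x heV, by rw [card_erase_of_mem hxe, hcard, Nat.add_sub_cancel]⟩
  obtain ⟨e, he, hmeet⟩ := hE.2 _ (hP.cons hx)
  have hxe : x ∈ e := by
    obtain ⟨a, ha⟩ := hmeet 0
    simp only [Fin.cons_zero, mem_inter, mem_singleton] at ha
    exact ha.2 ▸ ha.1
  refine ⟨e.erase x, mem_image_of_mem _ (mem_filter.mpr ⟨he, hxe⟩), fun i => ?_⟩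
  obtain ⟨a, ha⟩ := hmeet i.succ
  rw [Fin.cons_succ, mem_inter] at ha
  have hax : a ≠ x := fun h => notMem_erase x V (h ▸ hP.subset i ha.2)
  exact ⟨a, mem_inter.mpr ⟨mem_erase.mpr ⟨hax, ha.1⟩, ha.2⟩⟩

/-- Grow `S` one vertex at a time along a pair leaving `S`; that pair is new inside `S`. -/
theorem IsBlockingSet.exists_subset_card_eq {W : Finset α} {F : Finset (Finset α)}
    (hF : IsBlockingSet 2 W F) {k : ℕ} (hk1 : 1 ≤ k) (hk : k ≤ #W) :
    ∃ S ⊆ W, #S = k ∧ k - 1 ≤ #{f ∈ F | f ⊆ S} := by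
  induction k, hk1 using Nat.le_induction with
  | base =>
    obtain ⟨w, hw⟩ := card_pos.mp (by omega : 0 < #W)
    exact ⟨{w}, singleton_subset_iff.mpr hw, card_singleton w, Nat.zero_le _⟩
  | succ k hk1 ih =>
    obtain ⟨S, hSW, hSk, hSF⟩ := ih (by omega)
    have hS : S.Nonempty := card_pos.mp (by omega)
    have hSW' : S ≠ W := by rintro rfl; omega
    obtain ⟨f, hf, hmeet⟩ := hF.2 _ (isDPartition_two hSW hS hSW')
    obtain ⟨a, ha⟩ := hmeet 0
    obtain ⟨b, hb⟩ := hmeet 1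
    simp only [Fin.isValue, Matrix.cons_val_zero, Matrix.cons_val_one, mem_inter,
      mem_sdiff] at ha hb
    have hab : a ≠ b := by rintro rfl; exact hb.2.2 ha.2
    have hfba : f = {b, a} := (eq_of_subset_of_card_le
      (insert_subset hb.1 (singleton_subset_iff.mpr ha.1))
      (by rw [(hF.1 f hf).2, card_pair hab.symm])).symm
    have hfS : f ∉ {f ∈ F | f ⊆ S} := fun h => hb.2.2 ((mem_filter.mp h).2 hb.1)
    refine ⟨insert b S, insert_subset hb.2.1 hSW, by rw [card_insert_of_notMem hb.2.2, hSk], ?_⟩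
    calc k + 1 - 1 ≤ #(insert f {f ∈ F | f ⊆ S}) := by rw [card_insert_of_notMem hfS]; omega
      _ ≤ #{f ∈ F | f ⊆ insert b S} := by
        refine card_le_card (insert_subset ?_ (monotone_filter_right _ ?_))
        · rw [mem_filter, hfba]
          exact ⟨hfba ▸ hf, insert_subset_insert b (singleton_subset_iff.mpr ha.2)⟩
        · exact fun g _ hg => hg.trans (subset_insert b S)

theorem IsBlockingSet.card_sub_one_le_card {W : Finset α} {F : Finset (Finset α)}
    (hF : IsBlockingSet 2 W F) : #W - 1 ≤ #F := by
  rcases Nat.eq_zero_or_pos #W with hW | hW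
  · omega
  obtain ⟨S, -, -, hS⟩ := hF.exists_subset_card_eq hW le_rfl
  exact hS.trans (card_filter_le F _)

theorem card_mul_le_mul_card_of_le_degree {V : Finset α} {E : Finset (Finset α)} {d m : ℕ}
    (hE : ∀ e ∈ E, e ⊆ V ∧ #e = d) (hdeg : ∀ x ∈ V, m ≤ #{e ∈ E | x ∈ e}) :
    #V * m ≤ d * #E :=
  calc #V * m ≤ ∑ e ∈ E, #(V ∩ e) := le_sum_card_inter hdeg
    _ = ∑ _e ∈ E, d :=
      sum_congr rfl fun e he => by rw [inter_eq_right.mpr (hE e he).1, (hE e he).2]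
    _ = d * #E := by rw [sum_const, smul_eq_mul, mul_comm]

theorem IsBlockingSet.card_mul_card_sub_two_le {V : Finset α} {E : Finset (Finset α)}
    (hE : IsBlockingSet 3 V E) : #V * (#V - 2) ≤ 3 * #E := by
  refine card_mul_le_mul_card_of_le_degree hE.1 fun x hx => ?_
  have := (hE.link hx).card_sub_one_le_card
  rwa [card_erase_of_mem hx, card_link, Nat.sub_sub] at this

end

theorem blocking_lower_bound_general {α : Type*} [DecidableEq α] (V : Finset α) (n : ℕ)
    (hV : V.card = n) (E : Finset (Finset α))
    (hE : IsBlockingSet 3 V E) :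
    (n * (n - 2) + 2) / 3 ≤ E.card := by
  have := hE.card_mul_card_sub_two_le
  rw [hV] at this
  omega

theorem blocking_lower_bound {α : Type*} [DecidableEq α] (V : Finset α) (n : ℕ)
    (hn : 3 ≤ n) (hV : V.card = n) (E : Finset (Finset α))
    (hE : IsBlockingSet 3 V E) :
    (n * (n - 2) + 2) / 3 ≤ E.card :=
  blocking_lower_bound_general V n hV E hE
end

section
/- If \(\mathcal{E}\) is a \(d\)-blocking set on a set \(V\) with \(|V| = n \ge d \ge 3\), then for every \((d-2)\)-element subset \(C \subseteq V\), the number of sets in \(\mathcal{E}\) containing \(C\) is at least \(n - d + 1\). -/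
open Finset

namespace SimpleGraph

variable {β : Type*} {G : SimpleGraph β}

lemma connected_of_forall_exists_adj_compl [Nonempty β]
    (h : ∀ X : Set β, X.Nonempty → Xᶜ.Nonempty → ∃ x ∈ X, ∃ y ∉ X, G.Adj x y) :
    G.Connected := by
  obtain ⟨v⟩ := ‹Nonempty β›
  rw [connected_iff_exists_forall_reachable]
  refine ⟨v, fun w => ?_⟩
  by_contra hw
  obtain ⟨x, hx, y, hy, hxy⟩ := h {u | G.Reachable v u} ⟨v, Reachable.refl v⟩ ⟨w, hw⟩
  exact hy (hx.trans hxy.reachable)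

end SimpleGraph

section

variable {α : Type*} [DecidableEq α]

lemma card_le_card_add_one_of_forall_cut (W : Finset α) (S : Finset (Finset α))
    (hS : ∀ X ⊆ W, X.Nonempty → (W \ X).Nonempty →
      ∃ x ∈ X, ∃ y ∈ W \ X, {x, y} ∈ S) :
    #W ≤ #S + 1 := by
  rcases W.eq_empty_or_nonempty with rfl | ⟨w, hw⟩
  · simp
  have : Nonempty W := ⟨⟨w, hw⟩⟩
  let G : SimpleGraph W :=
    { Adj x y := x ≠ y ∧ {x.1, y.1} ∈ S
      symm := ⟨fun x y h => ⟨h.1.symm, Finset.pair_comm (x : α) y ▸ h.2⟩⟩ }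
  have hG : G.Connected := by
    refine SimpleGraph.connected_of_forall_exists_adj_compl fun X hX hXc => ?_
    classical
    obtain ⟨⟨y, hyW⟩, hyX⟩ := hXc
    obtain ⟨x, hxX, y', hy', hxy⟩ := hS (X.toFinset.map (.subtype _))
      (fun a ha => by obtain ⟨b, -, rfl⟩ := mem_map.1 ha; exact b.2)
      (by simpa using hX) ⟨y, by simpa [hyW] using hyX⟩
    simp only [mem_map, Set.mem_toFinset, Function.Embedding.subtype_apply, Subtype.exists,
      exists_and_right, exists_eq_right, mem_sdiff, not_exists] at hxX hy'
    obtain ⟨hxW, hxX⟩ := hxX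
    refine ⟨⟨x, hxW⟩, hxX, ⟨y', hy'.1⟩, hy'.2 hy'.1, ?_, hxy⟩
    rintro ⟨⟩
    exact hy'.2 hxW hxX
  have hedge : Nat.card G.edgeSet ≤ #S := by
    rw [← Nat.card_eq_finsetCard]
    refine Nat.card_le_card_of_injective
      (fun z => ⟨(z.1.map Subtype.val).toFinset, ?_⟩) fun z z' h => ?_
    · obtain ⟨z, hz⟩ := z
      induction z with
      | h x y => simpa [Sym2.toFinset_mk_eq] using hz.2
    · refine Subtype.ext (Sym2.map.injective Subtype.val_injective (Sym2.ext fun a => ?_))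
      simpa using congrArg (a ∈ ·.1) h
  have := hG.card_vert_le_card_edgeSet_add_one
  rw [Nat.card_eq_finsetCard] at this
  omega

lemma isDPartition_fibers {d : ℕ} (V : Finset α) (f : α → Fin d)
    (hf : ∀ i, ∃ x ∈ V, f x = i) :
    IsDPartition d V fun i => V.filter (f · = i) := by
  refine ⟨fun i => ?_, fun i j hij => ?_, ?_⟩
  · obtain ⟨x, hx, rfl⟩ := hf i
    exact ⟨x, mem_filter.2 ⟨hx, rfl⟩⟩
  · exact disjoint_filter.2 fun x _ hi hj => hij (hi.symm.trans hj)
  · ext x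
    simp

noncomputable def cutColouring (C X : Finset α) (z : α) : Fin (#C + 2) :=
  if h : z ∈ C then (C.equivFin ⟨z, h⟩).castSucc.castSucc
  else if z ∈ X then (Fin.last _).castSucc else Fin.last _

variable {C X : Finset α} {z : α}

lemma eq_of_cutColouring_eq {c : α} (hc : c ∈ C)
    (hz : cutColouring C X z = (C.equivFin ⟨c, hc⟩).castSucc.castSucc) : z = c := by
  by_cases hzC : z ∈ C
  · simpa [cutColouring, hzC] using hz
  · simp only [cutColouring, hzC, dite_false] at hz
    split_ifs at hz <;> simp [(Fin.castSucc_ne_last _).symm] at hz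

lemma cutColouring_eq_last_castSucc_iff :
    cutColouring C X z = (Fin.last _).castSucc ↔ z ∉ C ∧ z ∈ X := by
  by_cases hzC : z ∈ C <;> by_cases hzX : z ∈ X <;>
    simp [cutColouring, hzC, hzX, (Fin.castSucc_ne_last _).symm]

lemma cutColouring_eq_last_iff : cutColouring C X z = Fin.last _ ↔ z ∉ C ∧ z ∉ X := by
  by_cases hzC : z ∈ C <;> by_cases hzX : z ∈ X <;> simp [cutColouring, hzC, hzX]

lemma exists_cutColouring_eq {V : Finset α} (hCV : C ⊆ V) (hXV : X ⊆ V \ C) (hX : X.Nonempty)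
    (hXc : ((V \ C) \ X).Nonempty) (i : Fin (#C + 2)) : ∃ z ∈ V, cutColouring C X z = i := by
  induction i using Fin.lastCases with
  | last =>
    obtain ⟨y, hy⟩ := hXc
    simp only [mem_sdiff] at hy
    exact ⟨y, hy.1.1, cutColouring_eq_last_iff.2 ⟨hy.1.2, hy.2⟩⟩
  | cast j =>
    induction j using Fin.lastCases with
    | last =>
      obtain ⟨x, hx⟩ := hX
      have hxVC := mem_sdiff.1 (hXV hx)
      exact ⟨x, hxVC.1, cutColouring_eq_last_castSucc_iff.2 ⟨hxVC.2, hx⟩⟩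
    | cast m =>
      refine ⟨C.equivFin.symm m, hCV (C.equivFin.symm m).2, ?_⟩
      simp [cutColouring]

lemma IsBlockingSet.exists_sdiff_eq_pair {V : Finset α} {E : Finset (Finset α)}
    (hE : IsBlockingSet (#C + 2) V E) (hCV : C ⊆ V) (hXV : X ⊆ V \ C) (hX : X.Nonempty)
    (hXc : ((V \ C) \ X).Nonempty) :
    ∃ e ∈ E, C ⊆ e ∧ ∃ x ∈ X, ∃ y ∈ (V \ C) \ X, e \ C = {x, y} := by
  obtain ⟨e, heE, he⟩ :=
    hE.2 _ (isDPartition_fibers V _ (exists_cutColouring_eq hCV hXV hX hXc))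
  have hmeets : ∀ i, ∃ z ∈ e, z ∈ V ∧ cutColouring C X z = i := fun i => by
    simpa [Finset.Nonempty, and_assoc] using he i
  have hCe : C ⊆ e := fun c hc => by
    obtain ⟨z, hze, -, hz⟩ := hmeets (C.equivFin ⟨c, hc⟩).castSucc.castSucc
    exact eq_of_cutColouring_eq hc hz ▸ hze
  obtain ⟨x, hxe, -, hx⟩ := hmeets (Fin.last _).castSucc
  obtain ⟨y, hye, hyV, hy⟩ := hmeets (Fin.last _)
  obtain ⟨hxC, hxX⟩ := cutColouring_eq_last_castSucc_iff.1 hx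
  obtain ⟨hyC, hyX⟩ := cutColouring_eq_last_iff.1 hy
  have hxy : x ≠ y := by
    rintro rfl
    exact hyX hxX
  refine ⟨e, heE, hCe, x, hxX, y, by simp [hyV, hyC, hyX], ?_⟩
  refine (eq_of_subset_of_card_le ?_ ?_).symm
  · simp [insert_subset_iff, hxe, hye, hxC, hyC]
  · rw [card_pair hxy, card_sdiff_of_subset hCe, (hE.1 e heE).2]
    omega

end

theorem degree_lower_bound {α : Type*} [DecidableEq α] (V : Finset α) (n d : ℕ)
    (hd : 3 ≤ d) (hn : d ≤ n) (hV : V.card = n) (E : Finset (Finset α))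
    (hE : IsBlockingSet d V E) (C : Finset α) (hCV : C ⊆ V) (hC : C.card = d - 2) :
    n - d + 1 ≤ (E.filter (fun e => C ⊆ e)).card := by
  obtain rfl : d = #C + 2 := by omega
  have hW : #(V \ C) = n - #C := by rw [card_sdiff_of_subset hCV, hV]
  have hlink := card_le_card_add_one_of_forall_cut (V \ C)
    ((E.filter (fun e => C ⊆ e)).image (· \ C)) fun X hXW hX hXc => by
      obtain ⟨e, heE, hCe, x, hx, y, hy, hexy⟩ := hE.exists_sdiff_eq_pair hCV hXW hX hXc
      exact ⟨x, hx, y, hy, mem_image.2 ⟨e, mem_filter.2 ⟨heE, hCe⟩, hexy⟩⟩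
  have := card_image_le (s := E.filter (fun e => C ⊆ e)) (f := (· \ C))
  omega
end

section
/- For all positive integers \(d, k\), the minimum blocking set sizes satisfy the recurrence \(\varphi_d(2k) \le \varphi_d(k) + \sum_{i=1}^{d-1} \binom{k}{i} \varphi_{d-i}(k)\). -/
/-!
Split a `2k`-set as `A ⊔ B` with `|A| = |B| = k`. In a `d`-partition, say `d - i` parts meet `A`
(at least one does); their traces on `A` form a `(d - i)`-partition of `A`, blocked by an optimal
`(d - i)`-blocking set on `A`, while the remaining `i` parts lie inside `B` and are met by some
`i`-subset of `B`. So the sets `e ∪ S`, with `e` in an optimal `(d - i)`-blocking set on `A` and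
`S` an `i`-subset of `B`, for `i < d`, form a `d`-blocking set on `A ∪ B`; there are at most
`∑_{i<d} C(k, i) φ_{d-i}(k)` of them.
-/

open Finset

variable {α : Type*} [DecidableEq α]

theorem exists_subset_card_eq_forall_inter_nonempty {ι : Type*} {U : Finset ι}
    {P : ι → Finset α} (hne : ∀ j ∈ U, (P j).Nonempty) (hdisj : (U : Set ι).PairwiseDisjoint P) :
    ∃ S ⊆ U.biUnion P, S.card = U.card ∧ ∀ j ∈ U, (S ∩ P j).Nonempty := by
  choose b hb using hne
  refine ⟨U.attach.image fun j => b j.1 j.2, ?_, ?_, ?_⟩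
  · simp only [image_subset_iff, mem_attach, forall_const, Subtype.forall, mem_biUnion]
    exact fun j hj => ⟨j, hj, hb j hj⟩
  · rw [card_image_of_injective, card_attach]
    rintro ⟨i, hi⟩ ⟨j, hj⟩ (hij : b i hi = b j hj)
    by_contra hne
    exact disjoint_left.mp (hdisj hi hj fun h => hne (Subtype.ext h)) (hb i hi)
      (hij ▸ hb j hj)
  · exact fun j hj => ⟨b j hj, mem_inter.mpr ⟨mem_image_of_mem _ (mem_attach _ ⟨j, hj⟩), hb j hj⟩⟩

theorem isBlockingSet_powersetCard (d : ℕ) (V : Finset α) :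
    IsBlockingSet d V (V.powersetCard d) := by
  refine ⟨fun e he => mem_powersetCard.mp he, ?_⟩
  rintro P ⟨hne, hdisj, hcover⟩
  obtain ⟨S, hSV, hScard, hS⟩ := exists_subset_card_eq_forall_inter_nonempty
    (U := univ) (fun j _ => hne j) fun i _ j _ hij => hdisj i j hij
  rw [hcover, card_univ, Fintype.card_fin] at *
  exact ⟨S, mem_powersetCard.mpr ⟨hSV, hScard⟩, fun j => hS j (mem_univ j)⟩

theorem IsBlockingSet.exists_forall_inter_nonempty {ι : Type*} {m : ℕ} {V : Finset α}
    {E : Finset (Finset α)} (hE : IsBlockingSet m V E) {T : Finset ι} (hT : T.card = m)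
    {Q : ι → Finset α} (hne : ∀ j ∈ T, (Q j).Nonempty)
    (hdisj : (T : Set ι).PairwiseDisjoint Q) (hcover : T.biUnion Q = V) :
    ∃ e ∈ E, ∀ j ∈ T, (e ∩ Q j).Nonempty := by
  let σ : Fin m ≃ T := (T.equivFin.trans (finCongr hT)).symm
  have hpart : IsDPartition m V fun l => Q (σ l) := by
    refine ⟨fun l => hne _ (σ l).2, fun l l' hll' => ?_, ?_⟩
    · exact hdisj (σ l).2 (σ l').2 fun h => hll' (σ.injective (Subtype.ext h))
    · rw [← hcover]
      ext x
      simp only [mem_biUnion, mem_univ, true_and]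
      exact ⟨fun ⟨l, hl⟩ => ⟨_, (σ l).2, hl⟩,
        fun ⟨j, hj, hx⟩ => ⟨σ.symm ⟨j, hj⟩, by rwa [Equiv.apply_symm_apply]⟩⟩
  obtain ⟨e, heE, he⟩ := hE.2 _ hpart
  refine ⟨e, heE, fun j hj => ?_⟩
  simpa using he (σ.symm ⟨j, hj⟩)

theorem IsBlockingSet.image {β : Type*} [DecidableEq β] {d : ℕ} {V : Finset α}
    {E : Finset (Finset α)} (hE : IsBlockingSet d V E) {f : α → β} (hf : Set.InjOn f V) :
    IsBlockingSet d (V.image f) (E.image (·.image f)) := by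
  refine ⟨?_, fun P ⟨hne, hdisj, hcover⟩ => ?_⟩
  · simp only [mem_image, forall_exists_index, and_imp, forall_apply_eq_imp_iff₂]
    intro e he
    obtain ⟨heV, hecard⟩ := hE.1 e he
    rw [card_image_of_injOn (hf.mono (coe_subset.mpr heV)), hecard]
    exact ⟨image_subset_image heV, rfl⟩
  let Q : Fin d → Finset α := fun j => V.filter (f · ∈ P j)
  have hQne (j : Fin d) : (Q j).Nonempty := by
    obtain ⟨y, hy⟩ := hne j
    obtain ⟨x, hx, rfl⟩ := mem_image.mp (hcover ▸ mem_biUnion.mpr ⟨j, mem_univ j, hy⟩)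
    exact ⟨x, mem_filter.mpr ⟨hx, hy⟩⟩
  have hQdisj : ((univ : Finset (Fin d)) : Set (Fin d)).PairwiseDisjoint Q :=
    fun i _ j _ hij => disjoint_filter_filter' _ _ fun p hpi hpj x hx =>
      disjoint_left.mp (hdisj i j hij) (hpi x hx) (hpj x hx)
  have hQcover : univ.biUnion Q = V := by
    ext x
    simp only [Q, mem_biUnion, mem_univ, mem_filter, true_and]
    refine ⟨fun ⟨_, hx, _⟩ => hx, fun hx => ?_⟩
    simpa [hx, ← hcover] using mem_image_of_mem f hx
  obtain ⟨e, heE, he⟩ :=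
    hE.exists_forall_inter_nonempty (card_fin d) (fun j _ => hQne j) hQdisj hQcover
  refine ⟨e.image f, mem_image_of_mem _ heE, fun j => ?_⟩
  obtain ⟨x, hx⟩ := he j (mem_univ j)
  simp only [Q, mem_inter, mem_filter] at hx
  exact ⟨f x, mem_inter.mpr ⟨mem_image_of_mem f hx.1, hx.2.2⟩⟩

theorem exists_isBlockingSet_card_eq_phi (d n : ℕ) :
    ∃ E : Finset (Finset (Fin n)), IsBlockingSet d univ E ∧ E.card = phi d n :=
  Nat.sInf_mem (s := {m | ∃ E : Finset (Finset (Fin n)), IsBlockingSet d univ E ∧ E.card = m})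
    ⟨_, _, isBlockingSet_powersetCard d univ, rfl⟩

theorem phi_le_card {d n : ℕ} {E : Finset (Finset (Fin n))} (hE : IsBlockingSet d univ E) :
    phi d n ≤ E.card :=
  Nat.sInf_le ⟨E, hE, rfl⟩

theorem phi_fintypeCard_le_card [Fintype α] {d : ℕ} {E : Finset (Finset α)}
    (hE : IsBlockingSet d univ E) :
    phi d (Fintype.card α) ≤ E.card := by
  let e := Fintype.equivFin α
  have hE' := hE.image e.injective.injOn
  rw [image_univ_equiv] at hE'
  exact (phi_le_card hE').trans card_image_le

def blockingExtension (d : ℕ) (F : ℕ → Finset (Finset α)) (B : Finset α) : Finset (Finset α) :=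
  (range d).biUnion fun i => (B.powersetCard i).biUnion fun S => (F i).image fun e => e ∪ S

theorem mem_blockingExtension {d : ℕ} {F : ℕ → Finset (Finset α)} {B s : Finset α} :
    s ∈ blockingExtension d F B ↔ ∃ i < d, ∃ S ⊆ B, S.card = i ∧ ∃ e ∈ F i, e ∪ S = s := by
  simp [blockingExtension, and_assoc]

theorem card_blockingExtension_le (d : ℕ) (F : ℕ → Finset (Finset α)) (B : Finset α) :
    (blockingExtension d F B).card ≤ ∑ i ∈ range d, B.card.choose i * (F i).card :=
  calc (blockingExtension d F B).card
      ≤ ∑ i ∈ range d, ∑ S ∈ B.powersetCard i, (F i).card :=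
        card_biUnion_le.trans <| sum_le_sum fun _ _ =>
          card_biUnion_le.trans <| sum_le_sum fun _ _ => card_image_le
    _ = ∑ i ∈ range d, B.card.choose i * (F i).card := by simp [card_powersetCard]

theorem isBlockingSet_blockingExtension {d : ℕ} {A B : Finset α} {F : ℕ → Finset (Finset α)}
    (hAB : Disjoint A B) (hA : A.Nonempty) (hF : ∀ i < d, IsBlockingSet (d - i) A (F i)) :
    IsBlockingSet d (A ∪ B) (blockingExtension d F B) := by
  refine ⟨?_, fun P ⟨hne, hdisj, hcover⟩ => ?_⟩
  · simp only [mem_blockingExtension]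
    rintro _ ⟨i, hi, S, hSB, hScard, e, he, rfl⟩
    obtain ⟨heA, hecard⟩ := (hF i hi).1 e he
    refine ⟨union_subset_union heA hSB, ?_⟩
    rw [card_union_of_disjoint (hAB.mono heA hSB), hecard, hScard]
    omega
  have hmem (x) (hx : x ∈ A ∪ B) : ∃ j, x ∈ P j := by simpa [← hcover] using hx
  let T := univ.filter fun j => (P j ∩ A).Nonempty
  let U := univ.filter fun j => ¬(P j ∩ A).Nonempty
  have hTU : T.card + U.card = d := by
    rw [card_filter_add_card_filter_not, card_univ, Fintype.card_fin]
  have hT : 0 < T.card := by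
    obtain ⟨a, ha⟩ := hA
    obtain ⟨j, hj⟩ := hmem a (mem_union_left B ha)
    exact card_pos.mpr ⟨j, mem_filter.mpr ⟨mem_univ j, a, mem_inter.mpr ⟨hj, ha⟩⟩⟩
  have hTcover : T.biUnion (P · ∩ A) = A := by
    ext x
    simp only [T, mem_biUnion, mem_filter, mem_univ, true_and, mem_inter]
    refine ⟨fun ⟨_, _, _, hx⟩ => hx, fun hx => ?_⟩
    obtain ⟨j, hj⟩ := hmem x (mem_union_left B hx)
    exact ⟨j, ⟨x, mem_inter.mpr ⟨hj, hx⟩⟩, hj, hx⟩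
  obtain ⟨e, heF, he⟩ := (hF U.card (by omega)).exists_forall_inter_nonempty
    (Q := (P · ∩ A)) (Nat.eq_sub_of_add_eq hTU) (fun j hj => (mem_filter.mp hj).2)
    (fun i _ j _ hij => (hdisj i j hij).mono inter_subset_left inter_subset_left) hTcover
  obtain ⟨S, hSU, hScard, hS⟩ :=
    exists_subset_card_eq_forall_inter_nonempty (U := U) (fun j _ => hne j)
      fun i _ j _ hij => hdisj i j hij
  have hSB : S ⊆ B := by
    refine hSU.trans (biUnion_subset.mpr fun j hj x hx => ?_)
    have hxA : x ∉ A := fun hxA => (mem_filter.mp hj).2 ⟨x, mem_inter.mpr ⟨hx, hxA⟩⟩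
    simpa [hxA] using (hcover ▸ mem_biUnion.mpr ⟨j, mem_univ j, hx⟩ : x ∈ A ∪ B)
  refine ⟨e ∪ S, ?_, fun j => ?_⟩
  · exact mem_blockingExtension.mpr ⟨U.card, by omega, S, hSB, hScard, e, heF, rfl⟩
  by_cases hj : (P j ∩ A).Nonempty
  · obtain ⟨x, hx⟩ := he j (mem_filter.mpr ⟨mem_univ j, hj⟩)
    simp only [mem_inter] at hx
    exact ⟨x, mem_inter.mpr ⟨mem_union_left S hx.1, hx.2.1⟩⟩
  · obtain ⟨x, hx⟩ := hS j (mem_filter.mpr ⟨mem_univ j, hj⟩)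
    exact ⟨x, mem_inter.mpr ⟨mem_union_right e (mem_inter.mp hx).1, (mem_inter.mp hx).2⟩⟩

theorem phi_doubling_recurrence (d k : ℕ) (hd : 1 ≤ d) (hk : 1 ≤ k) :
    phi d (2 * k) ≤ phi d k + ∑ i ∈ Finset.Icc 1 (d - 1), k.choose i * phi (d - i) k := by
  choose E hE hEcard using fun m => exists_isBlockingSet_card_eq_phi m k
  let A : Finset (Fin k ⊕ Fin k) := univ.image Sum.inl
  let B : Finset (Fin k ⊕ Fin k) := univ.image Sum.inr
  have hAB : A ∪ B = univ := by ext (x | x) <;> simp [A, B]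
  have hblock := isBlockingSet_blockingExtension (d := d) (A := A) (B := B)
    (F := fun i => (E (d - i)).image (·.image Sum.inl))
    (by simp [A, B, disjoint_left]) ⟨.inl ⟨0, hk⟩, by simp [A]⟩
    fun i _ => (hE (d - i)).image Sum.inl_injective.injOn
  rw [hAB] at hblock
  have hIco : Ico 1 d = Icc 1 (d - 1) := by ext; simp only [mem_Ico, mem_Icc]; omega
  calc phi d (2 * k) = phi d (Fintype.card (Fin k ⊕ Fin k)) := by simp [two_mul]
    _ ≤ _ := phi_fintypeCard_le_card hblock
    _ ≤ ∑ i ∈ range d, k.choose i * phi (d - i) k := by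
      refine (card_blockingExtension_le ..).trans (sum_le_sum fun i _ => ?_)
      rw [card_image_of_injective _ Sum.inr_injective, card_univ, Fintype.card_fin, ← hEcard]
      exact Nat.mul_le_mul_left _ card_image_le
    _ = _ := by rw [range_eq_Ico, sum_eq_sum_Ico_succ_bot hd, hIco]; simp
end

section
/- Let \(A\) and \(B\) be disjoint sets and let \(x \in V = A \cup B\). If \(\mathcal{A}\) is a \((d-1)\)-blocking set on \(V \setminus \{x\}\) and \(\mathcal{B}\) is a \(d\)-blocking set on \(V \setminus \{x\}\), then \(\{\,E \cup \{x\} : E \in \mathcal{A}\,\} \cup \mathcal{B}\) is a \(d\)-blocking set on \(V\). -/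
namespace IsDPartition

variable {α : Type*} [DecidableEq α] {d : ℕ} {V : Finset α} {P : Fin d → Finset α} {x : α}

theorem exists_mem (hP : IsDPartition d V P) (hx : x ∈ V) : ∃ i, x ∈ P i := by
  obtain ⟨i, -, hi⟩ := Finset.mem_biUnion.1 (hP.2.2 ▸ hx)
  exact ⟨i, hi⟩

theorem subset_s10 (hP : IsDPartition d V P) (i : Fin d) : P i ⊆ V :=
  hP.2.2 ▸ Finset.subset_biUnion_of_mem P (Finset.mem_univ i)

theorem notMem_of_ne (hP : IsDPartition d V P) {i j : Fin d} (hi : x ∈ P i) (hji : j ≠ i) :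
    x ∉ P j :=
  fun hj => Finset.disjoint_left.1 (hP.2.1 j i hji) hj hi

theorem erase (hP : IsDPartition d V P) {i : Fin d} (hi : x ∈ P i)
    (hne : ((P i).erase x).Nonempty) :
    IsDPartition d (V.erase x) (fun j => (P j).erase x) := by
  refine ⟨fun j => ?_, fun j k hjk => ?_, ?_⟩
  · by_cases hji : j = i
    · exact hji ▸ hne
    · simpa only [Finset.erase_eq_of_notMem (hP.notMem_of_ne hi hji)] using hP.1 j
  · exact (hP.2.1 j k hjk).mono (Finset.erase_subset _ _) (Finset.erase_subset _ _)
  · ext y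
    simp only [Finset.mem_biUnion, Finset.mem_univ, true_and, Finset.mem_erase]
    constructor
    · rintro ⟨j, hyx, hy⟩
      exact ⟨hyx, hP.subset_s10 j hy⟩
    · rintro ⟨hyx, hy⟩
      obtain ⟨j, hj⟩ := hP.exists_mem hy
      exact ⟨j, hyx, hj⟩

theorem succAbove_of_eq_singleton {n : ℕ} {P : Fin (n + 1) → Finset α}
    (hP : IsDPartition (n + 1) V P) {i : Fin (n + 1)} (hi : P i = {x}) :
    IsDPartition n (V.erase x) (fun j => P (i.succAbove j)) := by
  have hxi : x ∈ P i := hi ▸ Finset.mem_singleton_self x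
  refine ⟨fun j => hP.1 _, fun j k hjk => hP.2.1 _ _ (Fin.succAbove_right_injective.ne hjk), ?_⟩
  ext y
  simp only [Finset.mem_biUnion, Finset.mem_univ, true_and, Finset.mem_erase]
  constructor
  · rintro ⟨j, hy⟩
    exact ⟨fun hyx => hP.notMem_of_ne hxi (Fin.succAbove_ne i j) (hyx ▸ hy), hP.subset_s10 _ hy⟩
  · rintro ⟨hyx, hy⟩
    obtain ⟨k, hk⟩ := hP.exists_mem hy
    have hki : k ≠ i := by
      rintro rfl
      exact hyx (Finset.mem_singleton.1 (hi ▸ hk))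
    obtain ⟨j, rfl⟩ := Fin.exists_succAbove_eq hki
    exact ⟨j, hk⟩

end IsDPartition

section PointExtension

variable {α : Type*} [DecidableEq α] {n : ℕ} {V : Finset α} {x : α} {𝒜 ℬ : Finset (Finset α)}

theorem subset_card_of_mem_image_insert_union (hx : x ∈ V)
    (h𝒜 : ∀ e ∈ 𝒜, e ⊆ V.erase x ∧ e.card = n) (hℬ : ∀ e ∈ ℬ, e ⊆ V.erase x ∧ e.card = n + 1) :
    ∀ e ∈ 𝒜.image (insert x) ∪ ℬ, e ⊆ V ∧ e.card = n + 1 := by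
  intro e he
  rcases Finset.mem_union.1 he with he | he
  · obtain ⟨a, ha, rfl⟩ := Finset.mem_image.1 he
    obtain ⟨haV, hcard⟩ := h𝒜 a ha
    have hxa : x ∉ a := fun h => (Finset.mem_erase.1 (haV h)).1 rfl
    exact ⟨Finset.insert_subset hx (haV.trans (Finset.erase_subset _ _)),
      by rw [Finset.card_insert_of_notMem hxa, hcard]⟩
  · obtain ⟨heV, hcard⟩ := hℬ e he
    exact ⟨heV.trans (Finset.erase_subset _ _), hcard⟩

theorem exists_meets_of_isDPartition_of_isBlockingSet (hx : x ∈ V)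
    (h𝒜 : IsBlockingSet n (V.erase x) 𝒜) (hℬ : IsBlockingSet (n + 1) (V.erase x) ℬ)
    {P : Fin (n + 1) → Finset α} (hP : IsDPartition (n + 1) V P) :
    ∃ e ∈ 𝒜.image (insert x) ∪ ℬ, ∀ i, (e ∩ P i).Nonempty := by
  obtain ⟨i, hxi⟩ := hP.exists_mem hx
  by_cases hne : ((P i).erase x).Nonempty
  · obtain ⟨e, he, hmeets⟩ := hℬ.2 _ (hP.erase hxi hne)
    exact ⟨e, Finset.mem_union_right _ he, fun j =>
      (hmeets j).mono (Finset.inter_subset_inter le_rfl (Finset.erase_subset _ _))⟩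
  · have hi : P i = {x} := by
      rw [Finset.not_nonempty_iff_eq_empty, Finset.erase_eq_empty_iff] at hne
      exact hne.resolve_left (hP.1 i).ne_empty
    obtain ⟨a, ha, hmeets⟩ := h𝒜.2 _ (hP.succAbove_of_eq_singleton hi)
    refine ⟨insert x a, Finset.mem_union_left _ (Finset.mem_image_of_mem _ ha), fun j => ?_⟩
    by_cases hji : j = i
    · exact ⟨x, Finset.mem_inter.2 ⟨Finset.mem_insert_self _ _, hji ▸ hxi⟩⟩
    · obtain ⟨k, rfl⟩ := Fin.exists_succAbove_eq hji
      exact (hmeets k).mono (Finset.inter_subset_inter (Finset.subset_insert _ _) le_rfl)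

end PointExtension

theorem blocking_of_point_extension_general {α : Type*} [DecidableEq α] (d : ℕ) (hd : 2 ≤ d)
    (V : Finset α) (x : α) (hx : x ∈ V)
    (𝒜 ℬ : Finset (Finset α))
    (h𝒜 : IsBlockingSet (d - 1) (V.erase x) 𝒜)
    (hℬ : IsBlockingSet d (V.erase x) ℬ) :
    IsBlockingSet d V ((𝒜.image (insert x)) ∪ ℬ) := by
  obtain ⟨n, rfl⟩ : ∃ n, d = n + 1 := ⟨d - 1, by omega⟩
  rw [Nat.add_sub_cancel] at h𝒜
  exact ⟨subset_card_of_mem_image_insert_union hx h𝒜.1 hℬ.1,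
    fun _ hP => exists_meets_of_isDPartition_of_isBlockingSet hx h𝒜 hℬ hP⟩

theorem blocking_of_point_extension {α : Type*} [DecidableEq α] (d : ℕ) (hd : 2 ≤ d)
    (V : Finset α) (hV : d < V.card) (x : α) (hx : x ∈ V)
    (𝒜 ℬ : Finset (Finset α))
    (h𝒜 : IsBlockingSet (d - 1) (V.erase x) 𝒜)
    (hℬ : IsBlockingSet d (V.erase x) ℬ) :
    IsBlockingSet d V ((𝒜.image (insert x)) ∪ ℬ) :=
  blocking_of_point_extension_general d hd V x hx 𝒜 ℬ h𝒜 hℬ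
end

section
/- Define \(\gamma_1 = \gamma_2 = 1\), \(\gamma_3 = 1/3\), and for \(d \ge 4\), \(\gamma_d = \frac{1}{2^{d-1}-1} \sum_{i=1}^{d-1} \frac{\gamma_{d-i}}{i!}\). Then for all \(d \ge 1\), \(\gamma_d \le \frac{1}{(d-1)!}\). -/
/-- The sequence `γ_d`: `γ_1 = γ_2 = 1`, `γ_3 = 1/3`, and for `d ≥ 4`,
`γ_d = (1 / (2^(d-1) - 1)) * ∑_{i=1}^{d-1} γ_{d-i} / i!`. -/
def gamma : ℕ → ℚ
  | 0 => 0
  | 1 => 1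
  | 2 => 1
  | 3 => 1/3
  | (d + 4) => (1 / (2 ^ (d + 3) - 1)) *
      ∑ i ∈ (Finset.Icc 1 (d + 3)).attach,
        gamma (d + 4 - i.val) / (Nat.factorial i.val)
  decreasing_by
    have := i.property
    simp only [Finset.mem_Icc] at this
    omega

/-!
By strong induction. Bounding each `γ_{d-i}` by `1 / (d-1-i)!` turns the recursive sum into
`∑_{i=1}^{n} 1 / ((n-i)! i!) = (2^n - 1) / n!` with `n = d - 1`, a binomial sum whose numerator
cancels the normalising factor `1 / (2^(d-1) - 1)` exactly.
-/

open Finset Nat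

theorem sum_Icc_one_div_factorial_sub_div_factorial {K : Type*} [Field K] [CharZero K] (n : ℕ) :
    ∑ i ∈ Icc 1 n, (1 : K) / (n - i)! / i ! = (2 ^ n - 1) / n ! := by
  have hchoose : ∀ i ∈ range (n + 1), (1 : K) / (n - i)! / i ! = n.choose i / n ! := by
    intro i hi
    rw [cast_choose K (Nat.lt_succ_iff.mp (mem_range.mp hi))]
    field_simp
    rw [div_mul_cancel_right₀ (mod_cast n.factorial_ne_zero), one_div]
  have hsum : ∑ i ∈ range (n + 1), (1 : K) / (n - i)! / i ! = 2 ^ n / n ! := by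
    rw [sum_congr rfl hchoose, ← sum_div, ← Nat.cast_sum, Nat.sum_range_choose, Nat.cast_pow,
      Nat.cast_ofNat]
  rw [range_succ_eq_Icc_zero, ← add_sum_Ioc_eq_sum_Icc n.zero_le, ← Icc_add_one_left_eq_Ioc] at hsum
  rw [sub_div, ← hsum]
  simp

theorem gamma_add_four (d : ℕ) :
    gamma (d + 4) = 1 / (2 ^ (d + 3) - 1) * ∑ i ∈ Icc 1 (d + 3), gamma (d + 4 - i) / i ! := by
  rw [gamma, sum_attach _ fun i ↦ gamma (d + 4 - i) / i !]

theorem gamma_add_four_le (d : ℕ) (hle : ∀ m ∈ Icc 1 (d + 3), gamma m ≤ 1 / (m - 1)!) :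
    gamma (d + 4) ≤ 1 / (d + 3)! := by
  have hsum : ∑ i ∈ Icc 1 (d + 3), gamma (d + 4 - i) / i ! ≤
      ∑ i ∈ Icc 1 (d + 3), (1 : ℚ) / (d + 3 - i)! / i ! := by
    refine sum_le_sum fun i hi ↦ div_le_div_of_nonneg_right ?_ (by positivity)
    obtain ⟨hi1, hid⟩ := mem_Icc.mp hi
    simpa [show d + 4 - i - 1 = d + 3 - i by omega] using
      hle (d + 4 - i) (mem_Icc.mpr ⟨by omega, by omega⟩)
  have hpos : (0 : ℚ) < 2 ^ (d + 3) - 1 := sub_pos.mpr (one_lt_pow₀ one_lt_two (by omega))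
  calc gamma (d + 4)
      ≤ 1 / (2 ^ (d + 3) - 1) * ((2 ^ (d + 3) - 1) / (d + 3)!) := by
        rw [gamma_add_four, ← sum_Icc_one_div_factorial_sub_div_factorial]
        exact mul_le_mul_of_nonneg_left hsum (by positivity)
    _ = 1 / (d + 3)! := by field_simp

theorem gamma_le (d : ℕ) (hd : 1 ≤ d) : gamma d ≤ 1 / (Nat.factorial (d - 1)) := by
  induction d using Nat.strong_induction_on with
  | _ d ih =>
    match d, hd with
    | 1, _ => norm_num [gamma]
    | 2, _ => norm_num [gamma]
    | 3, _ => norm_num [gamma, Nat.factorial]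
    | d + 4, _ => exact gamma_add_four_le d fun m hm ↦ ih m (by grind) (mem_Icc.mp hm).1
end

section
/- Define \(\gamma_1 = \gamma_2 = 1\), \(\gamma_3 = 1/3\), and for \(d \ge 4\), \(\gamma_d = \frac{1}{2^{d-1}-1} \sum_{i=1}^{d-1} \frac{\gamma_{d-i}}{i!}\). Then for all \(d \ge 3\), \(\gamma_d < \frac{0.86}{(d-1)!}\). -/
open Finset Nat

theorem sum_Icc_one_choose {R : Type*} [CommRing R] (n : ℕ) :
    ∑ i ∈ Icc 1 n, (n.choose i : R) = 2 ^ n - 1 := by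
  have h := congrArg (Nat.cast : ℕ → R) (Nat.sum_range_choose n)
  rw [range_eq_Ico, sum_eq_sum_Ico_succ_bot (by omega)] at h
  push_cast at h
  rw [← h, Nat.choose_zero_right, Nat.cast_one, add_sub_cancel_left]
  rfl

def scaledGamma (d : ℕ) : ℚ := (d - 1)! * gamma d

theorem scaledGamma_add_four (d : ℕ) :
    (2 ^ (d + 3) - 1) * scaledGamma (d + 4) =
      ∑ i ∈ Icc 1 (d + 3), ((d + 3).choose i : ℚ) * scaledGamma (d + 4 - i) := by
  have hpow : (2 : ℚ) ^ (d + 3) - 1 ≠ 0 := by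
    have : (1 : ℚ) < 2 ^ (d + 3) := one_lt_pow₀ one_lt_two (by omega)
    linarith
  rw [scaledGamma, gamma_add_four, show d + 4 - 1 = d + 3 from rfl, mul_left_comm,
    ← mul_assoc (2 ^ (d + 3) - 1), mul_one_div_cancel hpow, one_mul, mul_sum]
  refine sum_congr rfl fun i hi ↦ ?_
  have hi : i ≤ d + 3 := (mem_Icc.1 hi).2
  rw [scaledGamma, Nat.cast_choose ℚ hi, show d + 4 - i - 1 = d + 3 - i by omega]
  field_simp

theorem scaledGamma_add_four_lt {d : ℕ}
    (ih : ∀ m, 3 ≤ m → m < d + 4 → scaledGamma m < 86 / 100) :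
    scaledGamma (d + 4) < 86 / 100 := by
  have hsum : (2 ^ (d + 3) - 1) * (scaledGamma (d + 4) - 86 / 100) =
      ∑ i ∈ Icc 1 (d + 3), ((d + 3).choose i : ℚ) * (scaledGamma (d + 4 - i) - 86 / 100) := by
    rw [mul_sub, scaledGamma_add_four, ← sum_Icc_one_choose, sum_mul, ← sum_sub_distrib]
    simp only [mul_sub]
  rw [sum_Icc_succ_top (by omega : 1 ≤ d + 3), sum_Icc_succ_top (by omega : 1 ≤ d + 2),
    sum_Icc_succ_top (by omega : 1 ≤ d + 1), show d + 4 - (d + 1) = 3 by omega,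
    show d + 4 - (d + 2) = 2 by omega, show d + 4 - (d + 3) = 1 by omega] at hsum
  have hlater : ∑ i ∈ Icc 1 d, ((d + 3).choose i : ℚ) * (scaledGamma (d + 4 - i) - 86 / 100) ≤ 0 :=
    sum_nonpos fun i hi ↦ by
      have hi := mem_Icc.1 hi
      exact mul_nonpos_of_nonneg_of_nonpos (Nat.cast_nonneg _)
        (sub_nonpos.2 (ih _ (by omega) (by omega)).le)
  have hinitial : ((d + 3).choose (d + 1) : ℚ) * (scaledGamma 3 - 86 / 100)
      + ((d + 3).choose (d + 2) : ℚ) * (scaledGamma 2 - 86 / 100)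
      + ((d + 3).choose (d + 3) : ℚ) * (scaledGamma 1 - 86 / 100) < 0 := by
    rw [Nat.choose_symm_of_eq_add (show d + 3 = d + 1 + 2 by omega), Nat.cast_choose_two,
      Nat.choose_succ_self_right, Nat.choose_self]
    norm_num [scaledGamma, gamma]
    nlinarith
  have hneg : (2 ^ (d + 3) - 1) * (scaledGamma (d + 4) - 86 / 100) < 0 := by linarith
  have hpow : (1 : ℚ) < 2 ^ (d + 3) := one_lt_pow₀ one_lt_two (by omega)
  exact sub_neg.1 (neg_of_mul_neg_right hneg (by linarith))

theorem scaledGamma_lt : ∀ {d : ℕ}, 3 ≤ d → scaledGamma d < 86 / 100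
  | 3, _ => by norm_num [scaledGamma, gamma]
  | d + 4, _ => scaledGamma_add_four_lt fun m hm _ ↦ scaledGamma_lt hm
  | 0, h | 1, h | 2, h => by omega

theorem gamma_lt (d : ℕ) (hd : 3 ≤ d) : gamma d < (86 / 100) / (Nat.factorial (d - 1)) := by
  rw [lt_div_iff₀ (by positivity), mul_comm]
  exact scaledGamma_lt hd
end

section
/- Let \(A = \{a_0, \dots, a_{k-1}\}\) and \(B = \{b_0, \dots, b_{k-1}\}\) be disjoint \(k\)-element sets and let \(\mathcal{H}(A,B)\) consist of all triples \(\{a_i, a_j, b_{i+j}\}\) and \(\{a_i, a_j, b_{i+j+1}\}\) (indices mod \(k\), with \(i \ne j\)). Let \(X \subseteq A \cup B\) with \(B \cap X \ne \emptyset\). If \(A \cap X = \emptyset\), then the subgraph of \(G_{\mathcal{H}(A,B)}(X)\) induced by \(A\) is connected, and there are no edges of \(G_{\mathcal{H}(A,B)}(X)\) between \(A\) and \(B \setminus X\). -/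
/-- The graph `G_E(X)`: edges are pairs `{y, z}` such that `{x, y, z} ∈ E` for some `x ∈ X`. -/
def blockGraphS {α : Type*} [DecidableEq α] (E : Set (Finset α)) (X : Set α) :
    SimpleGraph α where
  Adj y z := y ≠ z ∧ ∃ x ∈ X, ({x, y, z} : Finset α) ∈ E
  symm := ⟨by
    rintro y z ⟨hyz, x, hx, he⟩
    refine ⟨hyz.symm, x, hx, ?_⟩
    have : ({x, z, y} : Finset α) = {x, y, z} := by ext t; simp; tauto
    rwa [this]⟩
  loopless := ⟨fun y h => h.1 rfl⟩

/-- The hypergraph `H(A,B)`: all triples `{a_i, a_j, b_{i+j}}` and `{a_i, a_j, b_{i+j+1}}`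
with indices taken modulo `k` and `i ≠ j`. -/
def HAB {α : Type*} [DecidableEq α] (k : ℕ) (a b : ZMod k → α) : Set (Finset α) :=
  { e | ∃ i j : ZMod k, i ≠ j ∧
      (e = ({a i, a j, b (i + j)} : Finset α) ∨
       e = ({a i, a j, b (i + j + 1)} : Finset α)) }

/-!
Fix `b m ∈ X`. Every triple of `H(A,B)` through `b m` gives an edge `a i a j` whenever
`i + j = m` or `i + j + 1 = m`, so `a i` is joined to `a (i - 1)` by the path
`a i, a (m - i), a (i - 1)`; stepping by `1` reaches every index. On the other side, `X` lies in
`B`, and each triple of `H(A,B)` meets `B` in a single vertex, so a triple through `x ∈ X` and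
`z ∈ B` forces `z = x ∈ X`.
-/

section

variable {α : Type*} [DecidableEq α] {k : ℕ} {a b : ZMod k → α}

theorem subsingleton_inter_range_b_of_mem_HAB (hab : Disjoint (Set.range a) (Set.range b))
    {e : Finset α} (he : e ∈ HAB k a b) : ((e : Set α) ∩ Set.range b).Subsingleton := by
  obtain ⟨i, j, -, he⟩ := he
  obtain ⟨s, rfl⟩ : ∃ s, e = {a i, a j, b s} := he.elim (⟨_, ·⟩) (⟨_, ·⟩)
  refine (Set.subsingleton_singleton (a := b s)).anti ?_
  rintro u ⟨hu, hub⟩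
  have huA : u ∉ Set.range a := Set.disjoint_right.mp hab hub
  simp only [Finset.coe_insert, Finset.coe_singleton, Set.mem_insert_iff,
    Set.mem_singleton_iff] at hu
  rcases hu with rfl | rfl | rfl
  exacts [(huA ⟨i, rfl⟩).elim, (huA ⟨j, rfl⟩).elim, rfl]

theorem blockGraphS_HAB_adj (ha : Function.Injective a) {X : Set α} {m : ZMod k}
    (hm : b m ∈ X) {i j : ZMod k} (hij : i ≠ j) (hsum : i + j = m ∨ i + j + 1 = m) :
    (blockGraphS (HAB k a b) X).Adj (a i) (a j) := by
  refine ⟨ha.ne hij, b m, hm, i, j, hij, ?_⟩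
  have hrot : ({b m, a i, a j} : Finset α) = {a i, a j, b m} := by
    rw [Finset.insert_comm, Finset.pair_comm (b m), Finset.insert_comm]
  rcases hsum with rfl | rfl
  exacts [Or.inl hrot, Or.inr hrot]

theorem ZMod.reachable_of_reachable_sub_one {V : Type*} {G : SimpleGraph V} {f : ZMod k → V}
    (h : ∀ i, G.Reachable (f i) (f (i - 1))) (i j : ZMod k) : G.Reachable (f i) (f j) := by
  suffices h0 : ∀ n : ℤ, G.Reachable (f 0) (f n) by
    obtain ⟨m, rfl⟩ := ZMod.intCast_surjective i
    obtain ⟨n, rfl⟩ := ZMod.intCast_surjective j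
    exact (h0 m).symm.trans (h0 n)
  intro n
  induction n using Int.induction_on with
  | zero => simp
  | succ n ih =>
    have hn := h ((n : ℤ) + 1)
    rw [add_sub_cancel_right] at hn
    rw [Int.cast_add, Int.cast_one]
    exact ih.trans hn.symm
  | pred n ih =>
    rw [Int.cast_sub, Int.cast_one]
    exact ih.trans (h _)

theorem blockGraphS_HAB_induce_connected (ha : Function.Injective a) {X : Set α} {m : ZMod k}
    (hm : b m ∈ X) : ((blockGraphS (HAB k a b) X).induce (Set.range a)).Connected := by
  set H := (blockGraphS (HAB k a b) X).induce (Set.range a)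
  set ι := Set.rangeFactorization a
  have hreach : ∀ i j, (i + j = m ∨ i + j + 1 = m) → H.Reachable (ι i) (ι j) := by
    intro i j hsum
    by_cases hij : i = j
    · rw [hij]
    · exact (show H.Adj (ι i) (ι j) from blockGraphS_HAB_adj ha hm hij hsum).reachable
  have hstep : ∀ i, H.Reachable (ι i) (ι (i - 1)) := fun i =>
    (hreach i (m - i) (.inl (by ring))).trans (hreach (m - i) (i - 1) (.inr (by ring)))
  have : Nonempty (Set.range a) := ⟨ι 0⟩
  refine ⟨?_⟩
  rintro ⟨_, i, rfl⟩ ⟨_, j, rfl⟩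
  exact ZMod.reachable_of_reachable_sub_one hstep i j

end

theorem hab_A_connected_of_A_disjoint_general {α : Type*} [DecidableEq α] (k : ℕ)
    (a b : ZMod k → α) (ha : Function.Injective a)
    (hab : Disjoint (Set.range a) (Set.range b)) (X : Set α)
    (hX : X ⊆ Set.range a ∪ Set.range b)
    (hBX : (Set.range b ∩ X).Nonempty) (hAX : Set.range a ∩ X = ∅) :
    ((blockGraphS (HAB k a b) X).induce (Set.range a)).Connected ∧
      ∀ y ∈ Set.range a, ∀ z ∈ Set.range b \ X,
        ¬ (blockGraphS (HAB k a b) X).Adj y z := by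
  obtain ⟨_, ⟨m, rfl⟩, hm⟩ := hBX
  refine ⟨blockGraphS_HAB_induce_connected ha hm, ?_⟩
  rintro y - z ⟨hzB, hzX⟩ ⟨-, x, hxX, he⟩
  have hxB : x ∈ Set.range b :=
    (hX hxX).resolve_left fun hxA => Set.eq_empty_iff_forall_notMem.mp hAX x ⟨hxA, hxX⟩
  have hxz : x = z := subsingleton_inter_range_b_of_mem_HAB hab he ⟨by simp, hxB⟩ ⟨by simp, hzB⟩
  exact hzX (hxz ▸ hxX)

theorem hab_A_connected_of_A_disjoint {α : Type*} [DecidableEq α] (k : ℕ) (hk : 2 ≤ k)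
    (a b : ZMod k → α) (ha : Function.Injective a) (hb : Function.Injective b)
    (hab : Disjoint (Set.range a) (Set.range b)) (X : Set α)
    (hX : X ⊆ Set.range a ∪ Set.range b)
    (hBX : (Set.range b ∩ X).Nonempty) (hAX : Set.range a ∩ X = ∅) :
    ((blockGraphS (HAB k a b) X).induce (Set.range a)).Connected ∧
      ∀ y ∈ Set.range a, ∀ z ∈ Set.range b \ X,
        ¬ (blockGraphS (HAB k a b) X).Adj y z :=
  hab_A_connected_of_A_disjoint_general k a b ha hab X hX hBX hAX
end
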